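/- arXiv:2301.08921 — 6 statements merged into one kernel-verified Lean document; each statement's English description precedes it below -/
import Mathlib

section
/- Let ι be any type and let W be any ℂ-vector space. Equip ℂ and W with the discrete topology and equip ι → ℂ with the product topology (each factor ℂ discrete). Then every continuous ℂ-linear map f : (ι → ℂ) → W has finite-dimensional range, i.e. the submodule LinearMap.range f is a finite-dimensional ℂ-vector space. -/
/-- A continuous linear map from a product of copies of discrete `ℂ`
(with the product topology) to a discrete vector space has
finite-dimensional range. -/
theorem stmt0 (ι : Type*) (W : Type*) [AddCommGroup W] [Module ℂ W]
    (f : (ι → ℂ) →ₗ[ℂ] W)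
    (hf : @Continuous (ι → ℂ) W
      (@Pi.topologicalSpace ι (fun _ => ℂ) (fun _ => (⊥ : TopologicalSpace ℂ)))
      (⊥ : TopologicalSpace W) f) :
    FiniteDimensional ℂ (LinearMap.range f) := by
  classical
  letI : TopologicalSpace ℂ := ⊥
  letI : TopologicalSpace W := ⊥
  haveI : DiscreteTopology W := ⟨rfl⟩
  have h0 : IsOpen (f ⁻¹' {0}) := hf.isOpen_preimage _ (isOpen_discrete _)
  rw [isOpen_pi_iff] at h0
  obtain ⟨I, u, hu, hsub⟩ := h0 0 (by simp [Set.mem_preimage, map_zero])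
  let e : (↥I → ℂ) →ₗ[ℂ] (ι → ℂ) :=
    { toFun := fun y i => if h : i ∈ I then y ⟨i, h⟩ else 0
      map_add' := by intro a b; funext i; by_cases h : i ∈ I <;> simp [h]
      map_smul' := by intro c a; funext i; by_cases h : i ∈ I <;> simp [h] }
  have hle : LinearMap.range f ≤ LinearMap.range (f.comp e) := by
    rintro w ⟨x, rfl⟩
    refine ⟨fun i => x i.1, ?_⟩
    have hz : f (x - e (fun i => x i.1)) = 0 := by
      have hmem : (x - e (fun i => x i.1)) ∈ (↑I : Set ι).pi u := by
        intro i hi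
        have h0u : (0 : ℂ) ∈ u i := (hu i hi).2
        simpa [e, show i ∈ I from hi] using h0u
      have := hsub hmem
      simpa using this
    have := map_sub f x (e (fun i => x i.1))
    rw [hz] at this
    simp only [LinearMap.comp_apply]
    exact (sub_eq_zero.mp this.symm).symm
  haveI : FiniteDimensional ℂ (↥I → ℂ) := by infer_instance
  exact Submodule.finiteDimensional_of_le hle
end

section
/- Let ι be a type. Equip ℂ with the discrete topology, U := (ι →₀ ℂ) with the discrete topology, U* := (ι → ℂ) with the product topology, and V := U × U* with the product topology. Define A((u,φ),(u',φ')) := ∑_i φ i * u' i + ∑_i φ' i * u i (finite sums). Then: (1) for each v ∈ V the functional A(v, ·) : V → ℂ is continuous; (2) the map Φ_A : v ↦ A(v, ·) is a ℂ-linear bijection from V onto the space of all continuous ℂ-linear maps V → ℂ; (3) for every continuous ℂ-linear map f : V → V satisfying A(f v, w) + A(v, f w) = 0 for all v, w ∈ V, one has Φ_A(f v) = −(Φ_A v) ∘ f for all v ∈ V. -/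
/-- The topology of the self-dual Tate space `V = U × U*`, where
`U = ι →₀ ℂ` is discrete and `U* = ι → ℂ` carries the product topology
over discrete `ℂ`. -/
noncomputable def VTopA (ι : Type*) : TopologicalSpace ((ι →₀ ℂ) × (ι → ℂ)) :=
  @instTopologicalSpaceProd _ _ (⊥ : TopologicalSpace (ι →₀ ℂ))
    (@Pi.topologicalSpace ι (fun _ => ℂ) (fun _ => (⊥ : TopologicalSpace ℂ)))

/-- The nondegenerate symmetric bilinear form
`A((u,φ),(u',φ')) = ∑_i φ i * u' i + ∑_i φ' i * u i` on `V = U × U*`. -/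
noncomputable def Aform (ι : Type*) (v w : (ι →₀ ℂ) × (ι → ℂ)) : ℂ :=
  w.1.sum (fun i a => v.2 i * a) + v.1.sum (fun i a => w.2 i * a)

section Aux

variable {ι : Type*}

private lemma aform_add_right (v w w' : (ι →₀ ℂ) × (ι → ℂ)) :
    Aform ι v (w + w') = Aform ι v w + Aform ι v w' := by
  simp only [Aform, Prod.fst_add, Prod.snd_add]
  rw [Finsupp.sum_add_index' (fun i => mul_zero _) (fun i a b => mul_add _ _ _)]
  have : (v.1.sum fun i a => (w.2 + w'.2) i * a)
      = (v.1.sum fun i a => w.2 i * a) + (v.1.sum fun i a => w'.2 i * a) := by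
    rw [← Finsupp.sum_add]
    congr 1; funext i a; simp [add_mul]
  rw [this]; ring

private lemma aform_smul_right (c : ℂ) (v w : (ι →₀ ℂ) × (ι → ℂ)) :
    Aform ι v (c • w) = c * Aform ι v w := by
  simp only [Aform, Prod.smul_fst, Prod.smul_snd]
  rw [Finsupp.sum_smul_index (fun i => mul_zero _)]
  rw [mul_add, Finsupp.mul_sum, Finsupp.mul_sum]
  congr 1
  · congr 1; funext i a; ring
  · congr 1; funext i a; simp [smul_eq_mul]; ring

private lemma aform_add_left (v v' w : (ι →₀ ℂ) × (ι → ℂ)) :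
    Aform ι (v + v') w = Aform ι v w + Aform ι v' w := by
  simp only [Aform, Prod.fst_add, Prod.snd_add]
  rw [Finsupp.sum_add_index' (fun i => mul_zero _) (fun i a b => mul_add _ _ _)]
  have : (w.1.sum fun i a => (v.2 + v'.2) i * a)
      = (w.1.sum fun i a => v.2 i * a) + (w.1.sum fun i a => v'.2 i * a) := by
    rw [← Finsupp.sum_add]
    congr 1; funext i a; simp [add_mul]
  rw [this]; ring

private lemma aform_smul_left (c : ℂ) (v w : (ι →₀ ℂ) × (ι → ℂ)) :
    Aform ι (c • v) w = c * Aform ι v w := by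
  simp only [Aform, Prod.smul_fst, Prod.smul_snd]
  rw [Finsupp.sum_smul_index (fun i => mul_zero _)]
  rw [mul_add, Finsupp.mul_sum, Finsupp.mul_sum]
  congr 1
  · congr 1; funext i a; simp [smul_eq_mul]; ring
  · congr 1; funext i a; ring

private lemma aform_single (v : (ι →₀ ℂ) × (ι → ℂ)) (i : ι) :
    Aform ι v (Finsupp.single i 1, 0) = v.2 i := by
  simp [Aform, Finsupp.sum_single_index]

private lemma aform_pisingle [DecidableEq ι] (v : (ι →₀ ℂ) × (ι → ℂ)) (i : ι) :
    Aform ι v (0, Pi.single i (1 : ℂ)) = v.1 i := by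
  have h0 : Aform ι v (0, Pi.single i (1 : ℂ))
      = ∑ j ∈ v.1.support, (Pi.single i (1 : ℂ) : ι → ℂ) j * v.1 j := by
    simp [Aform, Finsupp.sum]
  rw [h0]
  have hterm : ∀ j ∈ v.1.support,
      (Pi.single i (1 : ℂ) : ι → ℂ) j * v.1 j = if j = i then v.1 j else 0 := by
    intro j _
    by_cases hji : j = i
    · subst hji; simp
    · simp [Pi.single_eq_of_ne hji, hji]
  rw [Finset.sum_congr rfl hterm, Finset.sum_ite_eq' v.1.support i (fun j => v.1 j)]
  split
  · rfl
  · next hni => exact (Finsupp.notMem_support_iff.1 hni).symm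

end Aux

/-- `Φ_A : v ↦ A(v, ·)` is a `ℂ`-linear bijection from `V` onto the space of
continuous linear functionals on `V`, and it is `𝔬(V)`-equivariant:
`Φ_A (f v) = -(Φ_A v) ∘ f` for every continuous `f` with
`A(f v, w) + A(v, f w) = 0`. -/
theorem stmt2 (ι : Type*) :
    -- (1) each `A(v, ·)` is continuous
    (∀ v : (ι →₀ ℂ) × (ι → ℂ),
      @Continuous _ ℂ (VTopA ι) (⊥ : TopologicalSpace ℂ) (fun w => Aform ι v w)) ∧
    -- (2) `Φ_A` is a `ℂ`-linear bijection onto the continuous linear functionals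
    IsLinearMap ℂ (fun v : (ι →₀ ℂ) × (ι → ℂ) => (fun w => Aform ι v w)) ∧
    (∀ v : (ι →₀ ℂ) × (ι → ℂ), IsLinearMap ℂ (fun w => Aform ι v w)) ∧
    Function.Injective (fun v : (ι →₀ ℂ) × (ι → ℂ) => (fun w => Aform ι v w)) ∧
    (∀ g : ((ι →₀ ℂ) × (ι → ℂ)) →ₗ[ℂ] ℂ,
      @Continuous _ ℂ (VTopA ι) (⊥ : TopologicalSpace ℂ) g →
      ∃ v : (ι →₀ ℂ) × (ι → ℂ), ∀ w, g w = Aform ι v w) ∧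
    -- (3) equivariance for continuous `f ∈ 𝔬(V, A)`
    (∀ f : ((ι →₀ ℂ) × (ι → ℂ)) →ₗ[ℂ] ((ι →₀ ℂ) × (ι → ℂ)),
      @Continuous _ _ (VTopA ι) (VTopA ι) f →
      (∀ v w, Aform ι (f v) w + Aform ι v (f w) = 0) →
      ∀ v, (fun w => Aform ι (f v) w) = fun w => -(Aform ι v (f w))) := by
  classical
  letI tC : TopologicalSpace ℂ := ⊥
  haveI : DiscreteTopology ℂ := ⟨rfl⟩
  letI tU : TopologicalSpace (ι →₀ ℂ) := ⊥
  haveI : DiscreteTopology (ι →₀ ℂ) := ⟨rfl⟩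
  letI tUs : TopologicalSpace (ι → ℂ) := Pi.topologicalSpace
  refine ⟨?_, ?_, ?_, ?_, ?_, ?_⟩
  · -- (1) continuity of A(v,·)
    intro v
    show Continuous fun w : (ι →₀ ℂ) × (ι → ℂ) =>
      (w.1.sum fun i a => v.2 i * a) + (v.1.sum fun i a => w.2 i * a)
    apply Continuous.add
    · exact (continuous_of_discreteTopology
        (f := fun x : ι →₀ ℂ => x.sum fun i a => v.2 i * a)).comp continuous_fst
    · show Continuous fun w : (ι →₀ ℂ) × (ι → ℂ) =>
        ∑ i ∈ v.1.support, w.2 i * v.1 i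
      refine continuous_finset_sum _ (fun i _ => ?_)
      have h1 : Continuous fun w : (ι →₀ ℂ) × (ι → ℂ) => w.2 i :=
        (continuous_apply i).comp continuous_snd
      exact (continuous_of_discreteTopology (f := fun x : ℂ => x * v.1 i)).comp h1
  · -- (2a) linearity in v
    exact ⟨fun v v' => funext fun w => aform_add_left v v' w,
      fun c v => funext fun w => aform_smul_left c v w⟩
  · -- (2b) linearity in w
    exact fun v => ⟨fun w w' => aform_add_right v w w',
      fun c w => aform_smul_right c v w⟩
  · -- (2c) injectivity
    intro v v' h
    have h2 : ∀ i, v.2 i = v'.2 i := fun i => by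
      have heq : Aform ι v (Finsupp.single i 1, 0)
          = Aform ι v' (Finsupp.single i 1, 0) := congrFun h _
      rwa [aform_single, aform_single] at heq
    have h1 : ∀ i, v.1 i = v'.1 i := fun i => by
      have heq : Aform ι v (0, Pi.single i (1 : ℂ))
          = Aform ι v' (0, Pi.single i (1 : ℂ)) := congrFun h _
      rwa [aform_pisingle, aform_pisingle] at heq
    exact Prod.ext (Finsupp.ext h1) (funext h2)
  · -- (2d) surjectivity
    intro g hg
    set φ : ι → ℂ := fun i => g (Finsupp.single i 1, 0) with hφ
    -- restriction of g to the second factor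
    set h : (ι → ℂ) →ₗ[ℂ] ℂ := g.comp (LinearMap.inr ℂ (ι →₀ ℂ) (ι → ℂ)) with hh
    have hhcont : Continuous h := by
      have : Continuous fun ψ : ι → ℂ => ((0 : ι →₀ ℂ), ψ) :=
        continuous_const.prodMk continuous_id
      exact hg.comp this
    -- the kernel contains functions vanishing on a finite set s
    have hker : IsOpen (h ⁻¹' {0}) := (isOpen_discrete _).preimage hhcont
    have hmem : h ⁻¹' {0} ∈ nhds (0 : ι → ℂ) :=
      hker.mem_nhds (by simp)
    rw [nhds_pi, Filter.mem_pi] at hmem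
    obtain ⟨I, hIfin, t, ht, hsub⟩ := hmem
    set s : Finset ι := hIfin.toFinset with hs
    have hvanish : ∀ ψ : ι → ℂ, (∀ i ∈ s, ψ i = 0) → h ψ = 0 := by
      intro ψ hψ
      apply hsub
      intro i hi
      have : ψ i = 0 := hψ i (hIfin.mem_toFinset.2 hi)
      rw [this]
      have := ht i
      rw [nhds_discrete, Filter.mem_pure] at this
      exact this
    have hdecomp : ∀ ψ : ι → ℂ, h ψ = ∑ i ∈ s, ψ i * h (Pi.single i 1) := by
      intro ψ
      set ψ₀ : ι → ℂ := ∑ i ∈ s, ψ i • (Pi.single i (1 : ℂ) : ι → ℂ) with hψ₀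
      have hψ₀app : ∀ i ∈ s, ψ₀ i = ψ i := by
        intro i hi
        rw [hψ₀]
        simp only [Finset.sum_apply, Pi.smul_apply, Pi.single_apply, smul_eq_mul]
        rw [Finset.sum_eq_single i]
        · simp
        · intro j hj hne; simp [Ne.symm hne]
        · intro hni; exact absurd hi hni
      have hrest : h (ψ - ψ₀) = 0 := by
        apply hvanish
        intro i hi
        simp [hψ₀app i hi]
      have : h ψ = h ψ₀ + h (ψ - ψ₀) := by rw [← map_add]; congr 1; abel
      rw [this, hrest, add_zero, hψ₀, map_sum]
      congr 1; funext i
      rw [map_smul, smul_eq_mul]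
    -- build the Finsupp u
    set c : ι → ℂ := fun i => h (Pi.single i 1) with hc
    set u : ι →₀ ℂ := ∑ i ∈ s, Finsupp.single i (c i) with hu
    have huapp : ∀ i, u i = if i ∈ s then c i else 0 := by
      intro i
      rw [hu]
      rw [Finsupp.finset_sum_apply]
      simp only [Finsupp.single_apply]
      rw [Finset.sum_ite_eq' s i c]
    have husupp : u.support ⊆ s := by
      intro i hi
      by_contra hni
      have := huapp i
      rw [if_neg hni] at this
      exact Finsupp.mem_support_iff.1 hi this
    refine ⟨(u, φ), fun w => ?_⟩
    have hsplit : w = ((w.1, 0) : (ι →₀ ℂ) × (ι → ℂ)) + (0, w.2) := by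
      ext <;> simp
    have hfst : g (w.1, (0 : ι → ℂ)) = w.1.sum fun i a => φ i * a := by
      set ℓ : (ι →₀ ℂ) →ₗ[ℂ] ℂ := g.comp (LinearMap.inl ℂ (ι →₀ ℂ) (ι → ℂ)) with hℓ
      have h0 : g (w.1, (0 : ι → ℂ)) = ℓ w.1 := rfl
      rw [h0]
      conv_lhs => rw [← Finsupp.sum_single w.1]
      rw [map_finsuppSum]
      congr 1
      funext i a
      have : Finsupp.single i a = a • Finsupp.single i (1 : ℂ) := by
        rw [Finsupp.smul_single', mul_one]
      rw [this, map_smul, smul_eq_mul, mul_comm]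
      rfl
    have hsnd : g ((0 : ι →₀ ℂ), w.2) = u.sum fun i a => w.2 i * a := by
      have h0 : g ((0 : ι →₀ ℂ), w.2) = h w.2 := rfl
      rw [h0, hdecomp w.2,
        Finsupp.sum_of_support_subset u husupp _ (fun i _ => mul_zero _)]
      refine Finset.sum_congr rfl (fun i hi => ?_)
      rw [huapp i, if_pos hi]
    calc g w = g ((w.1, 0) + ((0 : ι →₀ ℂ), w.2)) := by rw [← hsplit]
      _ = g (w.1, (0 : ι → ℂ)) + g ((0 : ι →₀ ℂ), w.2) := map_add _ _ _
      _ = (w.1.sum fun i a => φ i * a) + u.sum fun i a => w.2 i * a := by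
          rw [hfst, hsnd]
      _ = Aform ι (u, φ) w := rfl
  · -- (3) equivariance
    intro f hf hskew v
    funext w
    exact eq_neg_of_add_eq_zero_left (hskew v w)
end

section
/- Let ι be a type. Equip ℂ with the discrete topology, U := (ι →₀ ℂ) with the discrete topology, U* := (ι → ℂ) with the product topology, and V := U × U* with the product topology. Define B((u,φ),(u',φ')) := ∑_i φ i * u' i − ∑_i φ' i * u i (finite sums). Then: (1) for each v ∈ V the functional B(v, ·) : V → ℂ is continuous; (2) the map Φ_B : v ↦ B(v, ·) is a ℂ-linear bijection from V onto the space of all continuous ℂ-linear maps V → ℂ; (3) for every continuous ℂ-linear map f : V → V satisfying B(f v, w) + B(v, f w) = 0 for all v, w ∈ V, one has Φ_B(f v) = −(Φ_B v) ∘ f for all v ∈ V. -/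
/-- The topology of the self-dual Tate space `V = U × U*`, where
`U = ι →₀ ℂ` is discrete and `U* = ι → ℂ` carries the product topology
over discrete `ℂ`. -/
noncomputable def VTopB (ι : Type*) : TopologicalSpace ((ι →₀ ℂ) × (ι → ℂ)) :=
  @instTopologicalSpaceProd _ _ (⊥ : TopologicalSpace (ι →₀ ℂ))
    (@Pi.topologicalSpace ι (fun _ => ℂ) (fun _ => (⊥ : TopologicalSpace ℂ)))

/-- The nondegenerate antisymmetric bilinear form
`B((u,φ),(u',φ')) = ∑_i φ i * u' i - ∑_i φ' i * u i` on `V = U × U*`. -/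
noncomputable def Bform (ι : Type*) (v w : (ι →₀ ℂ) × (ι → ℂ)) : ℂ :=
  w.1.sum (fun i a => v.2 i * a) - v.1.sum (fun i a => w.2 i * a)

/-!
`B(v, ·)` only sees `w.1` and the finitely many coordinates `w.2 i` with `i ∈ supp v.1`, so it
is locally constant. Conversely, a continuous functional `g` with values in discrete `ℂ` has an
open kernel, which contains a basic neighbourhood `{0} × {φ | φ = 0 on I}` with `I` finite; hence
`g (0, φ) = ∑ i ∈ I, φ i * g (0, eᵢ)`, and `g = B(v, ·)` for `v = (-∑ i ∈ I, g (0, eᵢ) eᵢ, φ₀)`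
with `φ₀ i = g (eᵢ, 0)`. Testing against `(eᵢ, 0)` and `(0, eᵢ)` gives injectivity.
-/

open Finsupp

theorem IsLocallyConstant.exists_finset_eq_of_pi {ι Y : Type*} {X : ι → Type*}
    [∀ i, TopologicalSpace (X i)] {h : (∀ i, X i) → Y} (hh : IsLocallyConstant h)
    (x : ∀ i, X i) : ∃ I : Finset ι, ∀ y, (∀ i ∈ I, y i = x i) → h y = h x := by
  obtain ⟨I, u, hu, hsub⟩ := isOpen_pi_iff.mp (hh.isOpen_fiber (h x)) x rfl
  exact ⟨I, fun y hy => hsub fun i hi => hy i hi ▸ (hu i hi).2⟩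

theorem LinearMap.exists_finset_eq_sum_of_isLocallyConstant {ι K M : Type*} [DecidableEq ι]
    [Ring K] [TopologicalSpace K] [AddCommGroup M] [Module K M] (ℓ : (ι → K) →ₗ[K] M)
    (hℓ : IsLocallyConstant ℓ) :
    ∃ I : Finset ι, ∀ ψ, ℓ ψ = ∑ i ∈ I, ψ i • ℓ (Pi.single i 1) := by
  obtain ⟨I, hI⟩ := hℓ.exists_finset_eq_of_pi 0
  refine ⟨I, fun ψ => ?_⟩
  have hvanish : ℓ (ψ - ∑ i ∈ I, Pi.single i (ψ i)) = 0 := by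
    rw [hI _ fun i hi => by simp [hi], map_zero]
  rw [map_sub, sub_eq_zero, map_sum] at hvanish
  rw [hvanish]
  exact Finset.sum_congr rfl fun i _ => by
    rw [← map_smul, ← Pi.single_smul', smul_eq_mul, mul_one]

namespace Bform

variable {ι : Type*}

theorem eq_llift (v w : (ι →₀ ℂ) × (ι → ℂ)) :
    Bform ι v w = llift ℂ ℂ ℂ ι v.2 w.1 - llift ℂ ℂ ℂ ι w.2 v.1 := by
  simp only [Bform, llift_apply, lift_apply, smul_eq_mul, mul_comm]

theorem add_left (v v' w : (ι →₀ ℂ) × (ι → ℂ)) :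
    Bform ι (v + v') w = Bform ι v w + Bform ι v' w := by
  simp only [eq_llift, Prod.fst_add, Prod.snd_add, map_add, LinearMap.add_apply]
  ring

theorem smul_left (c : ℂ) (v w : (ι →₀ ℂ) × (ι → ℂ)) :
    Bform ι (c • v) w = c • Bform ι v w := by
  simp only [eq_llift, Prod.smul_fst, Prod.smul_snd, map_smul, LinearMap.smul_apply,
    smul_eq_mul]
  ring

theorem add_right (v w w' : (ι →₀ ℂ) × (ι → ℂ)) :
    Bform ι v (w + w') = Bform ι v w + Bform ι v w' := by
  simp only [eq_llift, Prod.fst_add, Prod.snd_add, map_add, LinearMap.add_apply]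
  ring

theorem smul_right (c : ℂ) (v w : (ι →₀ ℂ) × (ι → ℂ)) :
    Bform ι v (c • w) = c • Bform ι v w := by
  simp only [eq_llift, Prod.smul_fst, Prod.smul_snd, map_smul, LinearMap.smul_apply,
    smul_eq_mul]
  ring

theorem apply_single_zero (v : (ι →₀ ℂ) × (ι → ℂ)) (i : ι) :
    Bform ι v (single i 1, 0) = v.2 i := by
  simp [eq_llift]

theorem apply_zero_single [DecidableEq ι] (v : (ι →₀ ℂ) × (ι → ℂ)) (i : ι) :
    Bform ι v (0, Pi.single i 1) = -v.1 i := by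
  simp [Bform, Pi.single_apply, eq_comm]

theorem injective : Function.Injective (Bform ι) := by
  classical
  intro v v' h
  refine Prod.ext (Finsupp.ext fun i => ?_) (funext fun i => ?_)
  · simpa [apply_zero_single] using congrFun h (0, Pi.single i 1)
  · simpa [apply_single_zero] using congrFun h (single i 1, 0)

theorem isLocallyConstant (v : (ι →₀ ℂ) × (ι → ℂ)) :
    @IsLocallyConstant _ ℂ (VTopB ι) (Bform ι v) := by
  let _ : TopologicalSpace ℂ := ⊥
  let _ : TopologicalSpace (ι →₀ ℂ) := ⊥
  have : DiscreteTopology ℂ := ⟨rfl⟩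
  have : DiscreteTopology (ι →₀ ℂ) := ⟨rfl⟩
  refine (IsLocallyConstant.iff_exists_open _).mpr fun w => ?_
  refine ⟨{w.1} ×ˢ (v.1.support : Set ι).pi fun i => {w.2 i},
    (isOpen_discrete _).prod
      (isOpen_set_pi v.1.support.finite_toSet fun _ _ => isOpen_discrete _),
    ⟨rfl, fun _ _ => rfl⟩, ?_⟩
  rintro y ⟨hy₁, hy₂⟩
  simp only [Bform, Set.mem_singleton_iff.mp hy₁]
  congr 1
  exact Finsupp.sum_congr fun i hi => by rw [hy₂ i hi]

theorem exists_eq_of_continuous (g : ((ι →₀ ℂ) × (ι → ℂ)) →ₗ[ℂ] ℂ)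
    (hg : @Continuous _ ℂ (VTopB ι) ⊥ g) : ∃ v, ∀ w, g w = Bform ι v w := by
  classical
  let _ : TopologicalSpace ℂ := ⊥
  let _ : TopologicalSpace (ι →₀ ℂ) := ⊥
  have : DiscreteTopology ℂ := ⟨rfl⟩
  have hloc : IsLocallyConstant (g ∘ₗ LinearMap.inr ℂ _ _) :=
    ((IsLocallyConstant.iff_continuous g).mpr hg).comp_continuous (Continuous.prodMk_right 0)
  obtain ⟨I, hI⟩ := (g ∘ₗ LinearMap.inr ℂ _ _).exists_finset_eq_sum_of_isLocallyConstant hloc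
  simp only [LinearMap.comp_apply, LinearMap.inr_apply] at hI
  set φ₀ : ι → ℂ := fun i => g (single i 1, 0)
  have hU (u : ι →₀ ℂ) : g (u, 0) = llift ℂ ℂ ℂ ι φ₀ u :=
    (LinearMap.congr_fun ((llift ℂ ℂ ℂ ι).apply_symm_apply (g ∘ₗ LinearMap.inl ℂ _ _)) u).symm
  refine ⟨(-∑ i ∈ I, single i (g (0, Pi.single i 1)), φ₀), fun w => ?_⟩
  calc g w = g (w.1, 0) + g (0, w.2) := by rw [← map_add, Prod.mk_add_mk, add_zero, zero_add]
    _ = llift ℂ ℂ ℂ ι φ₀ w.1 + ∑ i ∈ I, w.2 i • g (0, Pi.single i 1) := by rw [← hI, hU]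
    _ = Bform ι _ w := by simp [eq_llift, map_neg, map_sum, mul_comm]

end Bform

/-- `Φ_B : v ↦ A(v, ·)` is a `ℂ`-linear bijection from `V` onto the space of
continuous linear functionals on `V`, and it is `𝔰𝔭(V)`-equivariant:
`Φ_B (f v) = -(Φ_B v) ∘ f` for every continuous `f` with
`B(f v, w) + B(v, f w) = 0`. -/
theorem stmt3 (ι : Type*) :
    -- (1) each `B(v, ·)` is continuous
    (∀ v : (ι →₀ ℂ) × (ι → ℂ),
      @Continuous _ ℂ (VTopB ι) (⊥ : TopologicalSpace ℂ) (fun w => Bform ι v w)) ∧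
    -- (2) `Φ_B` is a `ℂ`-linear bijection onto the continuous linear functionals
    IsLinearMap ℂ (fun v : (ι →₀ ℂ) × (ι → ℂ) => (fun w => Bform ι v w)) ∧
    (∀ v : (ι →₀ ℂ) × (ι → ℂ), IsLinearMap ℂ (fun w => Bform ι v w)) ∧
    Function.Injective (fun v : (ι →₀ ℂ) × (ι → ℂ) => (fun w => Bform ι v w)) ∧
    (∀ g : ((ι →₀ ℂ) × (ι → ℂ)) →ₗ[ℂ] ℂ,
      @Continuous _ ℂ (VTopB ι) (⊥ : TopologicalSpace ℂ) g →
      ∃ v : (ι →₀ ℂ) × (ι → ℂ), ∀ w, g w = Bform ι v w) ∧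
    -- (3) equivariance for continuous `f ∈ 𝔰𝔭(V, B)`
    (∀ f : ((ι →₀ ℂ) × (ι → ℂ)) →ₗ[ℂ] ((ι →₀ ℂ) × (ι → ℂ)),
      @Continuous _ _ (VTopB ι) (VTopB ι) f →
      (∀ v w, Bform ι (f v) w + Bform ι v (f w) = 0) →
      ∀ v, (fun w => Bform ι (f v) w) = fun w => -(Bform ι v (f w))) := by
  refine ⟨fun v => @IsLocallyConstant.continuous _ _ (VTopB ι) ⊥ _ (Bform.isLocallyConstant v),
    ⟨fun v v' => funext (Bform.add_left v v'), fun c v => funext (Bform.smul_left c v)⟩,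
    fun v => ⟨Bform.add_right v, fun c => Bform.smul_right c v⟩, Bform.injective,
    Bform.exists_eq_of_continuous, fun f _ hf v => funext fun w => ?_⟩
  exact eq_neg_of_add_eq_zero_left (hf v w)
end

section
/- Let Z : ℕ → ℕ → Type be a family of ℂ-vector spaces, and consider the product module P := ∏_{i : ℕ} ∏_{j : ℕ} Z i j. Define the submodules S₁ := {x ∈ P | the set {i | ∃ j, x i j ≠ 0} is finite} (the image of ⨁_i ∏_j Z i j) and S₂ := {x ∈ P | for every j, the set {i | x i j ≠ 0} is finite} (the image of ∏_j ⨁_i Z i j). Then S₁ ⊆ S₂; and if S₁ = S₂, then the set {i | the set {j | Z i j ≠ 0} is infinite} is finite, i.e. for all but finitely many i one has Z i j = 0 for all but finitely many j. -/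
/-- For a doubly indexed family of `ℂ`-vector spaces `Z i j`, inside the full
product `P = ∏ i ∏ j, Z i j` the subspace `S₁` (image of `⨁_i ∏_j Z i j`) is
contained in the subspace `S₂` (image of `∏_j ⨁_i Z i j`); and if `S₁ = S₂`,
then for all but finitely many `i` one has `Z i j = 0` for all but finitely
many `j`. -/
theorem stmt7 (Z : ℕ → ℕ → Type*) [∀ i j, AddCommGroup (Z i j)]
    [∀ i j, Module ℂ (Z i j)] :
    (∀ x : ∀ i j, Z i j,
      {i | ∃ j, x i j ≠ 0}.Finite → ∀ j, {i | x i j ≠ 0}.Finite) ∧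
    ((∀ x : ∀ i j, Z i j,
        {i | ∃ j, x i j ≠ 0}.Finite ↔ ∀ j, {i | x i j ≠ 0}.Finite) →
      {i | {j | Nontrivial (Z i j)}.Infinite}.Finite) := by
  classical
  constructor
  · intro x hx j
    exact hx.subset fun i hi => ⟨j, hi⟩
  · intro h
    by_contra hfin
    rw [← Set.not_infinite, not_not] at hfin
    set e := Set.Infinite.natEmbedding _ hfin with he
    have hmem : ∀ n : ℕ, {j | Nontrivial (Z (e n) j)}.Infinite := fun n => (e n).2
    choose jn hjn hlt using fun n => (hmem n).exists_gt n
    set x : ∀ i j, Z i j := fun i j =>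
      if h : ∃ n, ((e n : ℕ) = i ∧ jn n = j) then
        haveI : Nontrivial (Z i j) := by
          obtain ⟨n, h1, h2⟩ := h
          exact h1 ▸ h2 ▸ hjn n
        (exists_ne (0 : Z i j)).choose
      else 0 with hxdef
    have hx_ne : ∀ i j (hc : ∃ n, ((e n : ℕ) = i ∧ jn n = j)), x i j ≠ 0 := by
      intro i j hc
      haveI : Nontrivial (Z i j) := by
        obtain ⟨n, h1, h2⟩ := hc
        exact h1 ▸ h2 ▸ hjn n
      simp only [hxdef, dif_pos hc]
      exact (exists_ne (0 : Z i j)).choose_spec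
    have hx_zero : ∀ i j, x i j ≠ 0 → ∃ n, ((e n : ℕ) = i ∧ jn n = j) := by
      intro i j hij
      by_contra hc
      exact hij (by simp only [hxdef, dif_neg hc])
    have hfin2 : ∀ j, {i | x i j ≠ 0}.Finite := by
      intro j
      apply ((Set.finite_Iio j).image (fun n => ((e n : ℕ)))).subset
      intro i hi
      obtain ⟨n, h1, h2⟩ := hx_zero i j hi
      exact ⟨n, by simpa [h2] using hlt n, h1⟩
    have hinf : ¬ {i | ∃ j, x i j ≠ 0}.Finite := by
      intro hf
      have hsub : Set.range (fun n => ((e n : ℕ))) ⊆ {i | ∃ j, x i j ≠ 0} := by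
        rintro i ⟨n, rfl⟩
        exact ⟨jn n, hx_ne _ _ ⟨n, rfl, rfl⟩⟩
      have hinj : Function.Injective (fun n => ((e n : ℕ))) :=
        Subtype.val_injective.comp e.injective
      exact (Set.infinite_range_of_injective hinj) (hf.subset hsub)
    exact hinf ((h x).mpr hfin2)
end

section
/- Let ι be a type; equip ℂ with the discrete topology and M := (ι → ℂ) with the product topology. For i ∈ ι let P_i : M → M be the i-th coordinate projection, (P_i x) i = x i and (P_i x) j = 0 for j ≠ i. Let Z be a closed ℂ-subspace of M with P_i(Z) ⊆ Z for all i ∈ ι, and set s := {i ∈ ι | ∃ z ∈ Z, z i ≠ 0}. Then Z = {x ∈ M | x i = 0 for all i ∉ s}. In particular, the finitely supported elements of Z form a dense subspace of Z. -/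
/-- Let `M = ∏_{i ∈ ι} ℂ` with the product topology over discrete `ℂ`, and let
`Z` be a closed subspace stable under all coordinate projections `P_i`. With
`s = {i | ∃ z ∈ Z, z i ≠ 0}`, one has `Z = {x | x i = 0 for all i ∉ s}`; in
particular the finitely supported elements of `Z` are dense in `Z`. -/
theorem stmt9 (ι : Type*) [DecidableEq ι] (Z : Submodule ℂ (ι → ℂ))
    (hZc : @IsClosed (ι → ℂ)
      (@Pi.topologicalSpace ι (fun _ => ℂ) (fun _ => (⊥ : TopologicalSpace ℂ)))
      (Z : Set (ι → ℂ)))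
    (hZP : ∀ i : ι, ∀ z ∈ Z, (fun j => if j = i then z i else 0) ∈ Z) :
    (∀ x : ι → ℂ, x ∈ Z ↔ ∀ i, i ∉ {i : ι | ∃ z ∈ Z, z i ≠ 0} → x i = 0) ∧
    (Z : Set (ι → ℂ)) ⊆
      @closure (ι → ℂ)
        (@Pi.topologicalSpace ι (fun _ => ℂ) (fun _ => (⊥ : TopologicalSpace ℂ)))
        {x : ι → ℂ | x ∈ Z ∧ (Function.support x).Finite} := by
  classical
  letI : TopologicalSpace ℂ := ⊥
  -- key: if x agrees with some element of S on every finite set, x ∈ closure S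
  have key : ∀ (S : Set (ι → ℂ)) (x : ι → ℂ),
      (∀ F : Finset ι, ∃ z ∈ S, ∀ i ∈ F, z i = x i) → x ∈ closure S := by
    intro S x h
    rw [mem_closure_iff]
    intro o ho hxo
    rcases isOpen_pi_iff.mp ho x hxo with ⟨F, u, hu, hsub⟩
    rcases h F with ⟨z, hzS, hz⟩
    exact ⟨z, hsub fun i hi => (hz i hi) ▸ (hu i hi).2, hzS⟩
  -- single-coordinate elements of Z
  have single : ∀ (x : ι → ℂ), (∀ i, i ∉ {i : ι | ∃ z ∈ Z, z i ≠ 0} → x i = 0) →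
      ∀ i : ι, (fun j => if j = i then x i else 0) ∈ Z := by
    intro x hx i
    by_cases hs : ∃ z ∈ Z, z i ≠ 0
    · rcases hs with ⟨z, hzZ, hzi⟩
      have h1 : (fun j => if j = i then z i else 0) ∈ Z := hZP i z hzZ
      have h2 := Z.smul_mem (x i / z i) h1
      convert h2 using 1
      funext j
      by_cases hj : j = i <;> simp [hj, Pi.smul_apply, div_mul_cancel₀ _ hzi]
    · have : x i = 0 := hx i hs
      simp only [this]
      convert Z.zero_mem using 1
      funext j; simp
  -- truncations belong to Z
  have trunc : ∀ (x : ι → ℂ), (∀ i, i ∉ {i : ι | ∃ z ∈ Z, z i ≠ 0} → x i = 0) →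
      ∀ F : Finset ι, (fun j => if j ∈ F then x j else 0) ∈ Z := by
    intro x hx F
    have : (fun j => if j ∈ F then x j else 0)
        = ∑ i ∈ F, (fun j => if j = i then x i else 0) := by
      funext j
      rw [Finset.sum_apply, Finset.sum_ite_eq F j (fun i => x i)]
    rw [this]
    exact Submodule.sum_mem Z fun i _ => single x hx i
  constructor
  · intro x
    constructor
    · intro hxZ i hi
      simp only [Set.mem_setOf_eq, not_exists, not_and, not_not] at hi
      exact hi x hxZ
    · intro hx
      have hxcl : x ∈ closure (Z : Set (ι → ℂ)) := by
        apply key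
        intro F
        refine ⟨fun j => if j ∈ F then x j else 0, trunc x hx F, ?_⟩
        intro i hi; simp [hi]
      rwa [hZc.closure_eq] at hxcl
  · intro x hxZ
    apply key
    intro F
    refine ⟨fun j => if j ∈ F then x j else 0, ⟨?_, ?_⟩, fun i hi => by simp [hi]⟩
    · have : (fun j => if j ∈ F then x j else 0)
          = ∑ i ∈ F, (fun j => if j = i then x i else 0) := by
        funext j
        rw [Finset.sum_apply, Finset.sum_ite_eq F j (fun i => x i)]
      rw [this]
      exact Submodule.sum_mem Z fun i _ => hZP i x hxZ
    · apply Set.Finite.subset F.finite_toSet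
      intro j hj
      by_cases hjF : j ∈ F
      · exact hjF
      · simp [Function.mem_support, hjF] at hj
end

section
/- Let ι be a type; equip ℂ with the discrete topology and M := (ι → ℂ) with the product topology. For i ∈ ι let P_i : M → M be the i-th coordinate projection. Let Z be a closed ℂ-subspace of M with P_i(Z) ⊆ Z for all i. Then there exists a closed ℂ-subspace Q of M with P_i(Q) ⊆ Q for all i, such that Z ∩ Q = {0}, Z + Q = M, and the addition map Z × Q → M, (z,q) ↦ z + q, is a homeomorphism (a topological isomorphism of vector spaces). -/
/-- Let `M = ∏_{i ∈ ι} ℂ` with the product topology over discrete `ℂ`, and let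
`Z` be a closed subspace stable under all coordinate projections `P_i`. Then
there is a closed, projection-stable subspace `Q` with `Z ∩ Q = 0`,
`Z + Q = M`, and such that the addition map `Z × Q → M` is a homeomorphism. -/
theorem stmt10 (ι : Type*) [DecidableEq ι] (Z : Submodule ℂ (ι → ℂ))
    (hZc : @IsClosed (ι → ℂ)
      (@Pi.topologicalSpace ι (fun _ => ℂ) (fun _ => (⊥ : TopologicalSpace ℂ)))
      (Z : Set (ι → ℂ)))
    (hZP : ∀ i : ι, ∀ z ∈ Z, (fun j => if j = i then z i else 0) ∈ Z) :
    ∃ Q : Submodule ℂ (ι → ℂ),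
      @IsClosed (ι → ℂ)
        (@Pi.topologicalSpace ι (fun _ => ℂ) (fun _ => (⊥ : TopologicalSpace ℂ)))
        (Q : Set (ι → ℂ)) ∧
      (∀ i : ι, ∀ q ∈ Q, (fun j => if j = i then q i else 0) ∈ Q) ∧
      Z ⊓ Q = ⊥ ∧ Z ⊔ Q = ⊤ ∧
      @IsHomeomorph (↥Z × ↥Q) (ι → ℂ)
        (@instTopologicalSpaceProd ↥Z ↥Q
          (TopologicalSpace.induced Subtype.val
            (@Pi.topologicalSpace ι (fun _ => ℂ) (fun _ => (⊥ : TopologicalSpace ℂ))))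
          (TopologicalSpace.induced Subtype.val
            (@Pi.topologicalSpace ι (fun _ => ℂ) (fun _ => (⊥ : TopologicalSpace ℂ)))))
        (@Pi.topologicalSpace ι (fun _ => ℂ) (fun _ => (⊥ : TopologicalSpace ℂ)))
        (fun p => (p.1 : ι → ℂ) + (p.2 : ι → ℂ)) := by
  classical
  letI : TopologicalSpace ℂ := ⊥
  haveI : DiscreteTopology ℂ := ⟨rfl⟩
  set S : Set ι := {i | ∃ z ∈ Z, z i ≠ 0} with hS
  -- delta functions with values of f (supported in S) lie in Z
  have hdelta : ∀ (f : ι → ℂ), (∀ i, f i ≠ 0 → i ∈ S) → ∀ i : ι,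
      (fun j => if j = i then f i else 0) ∈ Z := by
    intro f hf i
    by_cases h0 : f i = 0
    · have h : (fun j => if j = i then f i else 0) = (0 : ι → ℂ) := by
        funext j; simp [h0]
      rw [h]; exact Z.zero_mem
    · obtain ⟨z, hz, hzi⟩ := hf i h0
      have hmem := Z.smul_mem (f i / z i) (hZP i z hz)
      have h : (f i / z i) • (fun j => if j = i then z i else 0)
          = (fun j => if j = i then f i else 0) := by
        funext j
        by_cases hj : j = i
        · simp [hj, div_mul_cancel₀ _ hzi]
        · simp [hj]
      rwa [h] at hmem
  -- Z consists exactly of functions supported in S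
  have hZ0 : ∀ f ∈ Z, ∀ i, i ∉ S → f i = 0 := by
    intro f hf i hi
    by_contra h
    exact hi ⟨f, hf, h⟩
  have hZmem : ∀ f : ι → ℂ, (∀ i, i ∉ S → f i = 0) → f ∈ Z := by
    intro f hf
    have hf' : ∀ i, f i ≠ 0 → i ∈ S := by
      intro i h; by_contra hi; exact h (hf i hi)
    have : f ∈ closure (Z : Set (ι → ℂ)) := by
      rw [mem_closure_iff_nhds]
      intro t ht
      rw [nhds_pi, Filter.mem_pi] at ht
      obtain ⟨I, hIfin, u, hu, hsub⟩ := ht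
      set g : ι → ℂ := ∑ k ∈ hIfin.toFinset, (fun j => if j = k then f k else 0) with hg
      have hgZ : g ∈ Z := Submodule.sum_mem Z fun k _ => hdelta f hf' k
      have hgval : ∀ i ∈ I, g i = f i := by
        intro i hi
        rw [hg, Finset.sum_apply]
        have : ∑ k ∈ hIfin.toFinset, (if i = k then f k else 0) = f i := by
          rw [Finset.sum_ite_eq]
          simp [hIfin.mem_toFinset, hi]
        simpa using this
      refine ⟨g, hsub ?_, hgZ⟩
      intro i hi
      rw [hgval i hi]
      have := hu i
      rw [nhds_discrete] at this
      exact this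
    rwa [hZc.closure_eq] at this
  -- the complement
  refine ⟨{ carrier := {f | ∀ i ∈ S, f i = 0}
            add_mem' := by intro a b ha hb i hi; simp [ha i hi, hb i hi]
            zero_mem' := by intro i hi; rfl
            smul_mem' := by intro c a ha i hi; simp [ha i hi] }, ?_, ?_, ?_, ?_, ?_⟩
  · -- closed
    have h : {f : ι → ℂ | ∀ i ∈ S, f i = 0} = ⋂ i ∈ S, {f : ι → ℂ | f i = 0} := by
      ext f; simp
    show IsClosed {f : ι → ℂ | ∀ i ∈ S, f i = 0}
    rw [h]
    exact isClosed_biInter fun i _ => isClosed_eq (continuous_apply i) continuous_const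
  · -- projection stable
    intro i q hq j hj
    by_cases hji : j = i
    · subst hji; simp [hq j hj]
    · simp [hji]
  · -- trivial intersection
    rw [eq_bot_iff]
    rintro f ⟨hfZ, hfQ⟩
    have : f = 0 := by
      funext i
      by_cases hi : i ∈ S
      · exact hfQ i hi
      · exact hZ0 f hfZ i hi
    simp [this]
  · -- spanning
    rw [eq_top_iff]
    intro f _
    rw [Submodule.mem_sup]
    refine ⟨fun i => if i ∈ S then f i else 0, ?_, fun i => if i ∈ S then 0 else f i, ?_, ?_⟩
    · exact hZmem _ (by intro i hi; simp [hi])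
    · intro i hi; simp [hi]
    · funext i; by_cases hi : i ∈ S <;> simp [hi]
  · -- homeomorphism
    set Q : Submodule ℂ (ι → ℂ) :=
      { carrier := {f | ∀ i ∈ S, f i = 0}
        add_mem' := by intro a b ha hb i hi; simp [ha i hi, hb i hi]
        zero_mem' := by intro i hi; rfl
        smul_mem' := by intro c a ha i hi; simp [ha i hi] } with hQdef
    have hQmem : ∀ f : ι → ℂ, f ∈ Q ↔ ∀ i ∈ S, f i = 0 := fun f => Iff.rfl
    let e : ↥Z × ↥Q ≃ (ι → ℂ) :=
      { toFun := fun p => (p.1 : ι → ℂ) + (p.2 : ι → ℂ)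
        invFun := fun f =>
          (⟨fun i => if i ∈ S then f i else 0, hZmem _ (by intro i hi; simp [hi])⟩,
           ⟨fun i => if i ∈ S then 0 else f i, by intro i hi; simp [hi]⟩)
        left_inv := by
          rintro ⟨⟨z, hz⟩, ⟨q, hq⟩⟩
          ext i <;> simp only
          · by_cases hi : i ∈ S
            · simp [hi, hq i hi]
            · simp [hi, hZ0 z hz i hi]
          · by_cases hi : i ∈ S
            · simp [hi, hq i hi]
            · simp [hi, hZ0 z hz i hi]
        right_inv := by
          intro f; funext i; by_cases hi : i ∈ S <;> simp [hi] }
    have hcont : Continuous e := by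
      apply continuous_pi
      intro i
      by_cases hi : i ∈ S
      · have h : (fun p : ↥Z × ↥Q => e p i) = fun p => (p.1 : ι → ℂ) i := by
          funext p
          have : (p.2 : ι → ℂ) i = 0 := p.2.2 i hi
          show (p.1 : ι → ℂ) i + (p.2 : ι → ℂ) i = _
          simp [this]
        rw [h]
        exact (continuous_apply i).comp (continuous_subtype_val.comp continuous_fst)
      · have h : (fun p : ↥Z × ↥Q => e p i) = fun p => (p.2 : ι → ℂ) i := by
          funext p
          have : (p.1 : ι → ℂ) i = 0 := hZ0 _ p.1.2 i hi
          show (p.1 : ι → ℂ) i + (p.2 : ι → ℂ) i = _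
          simp [this]
        rw [h]
        exact (continuous_apply i).comp (continuous_subtype_val.comp continuous_snd)
    have hcontinv : Continuous e.symm := by
      apply Continuous.prodMk
      · apply Continuous.subtype_mk
        apply continuous_pi
        intro i
        by_cases hi : i ∈ S
        · simpa [hi] using continuous_apply i
        · simpa [hi] using (continuous_const : Continuous fun _ : ι → ℂ => (0 : ℂ))
      · apply Continuous.subtype_mk
        apply continuous_pi
        intro i
        by_cases hi : i ∈ S
        · simpa [hi] using (continuous_const : Continuous fun _ : ι → ℂ => (0 : ℂ))
        · simpa [hi] using continuous_apply i
    exact (Homeomorph.mk e hcont hcontinv).isHomeomorph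
end
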